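/- If S is a nearly epsilon-strongly G-graded ring, then for every graded left S-module M and all g, h ∈ G, one has S_g M_h = (S_g S_{g⁻¹}) M_{gh}. -/

import Mathlib

/-!
For `s ∈ S_g` and `m ∈ M_h`, a local left unit `u ∈ S_g S_{g⁻¹}` of `s` gives
`s m = u (s m)` with `s m ∈ M_{gh}`; conversely `(S_g S_{g⁻¹}) M_{gh} ⊆ S_g (S_{g⁻¹} M_{gh})`
and `S_{g⁻¹} M_{gh} ⊆ M_h`.
-/

open Pointwise

section Defs

variable {G : Type} [AddGroup G] [DecidableEq G]
variable {A : Type} [Ring A]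
variable {M : Type} [AddCommGroup M] [Module A M]

/-- The additive subgroup of `M` consisting of finite sums of products `a • m`
with `a ∈ S` and `m ∈ N`. -/
def prodSMul (S : AddSubgroup A) (N : AddSubgroup M) : AddSubgroup M where
  __ := S.toAddSubmonoid • N.toAddSubmonoid
  neg_mem' {x} hx := by
    refine AddSubmonoid.smul_induction_on hx (fun a ha m hm => ?_) (fun x y hx hy => ?_)
    · rw [show -(a • m) = (-a) • m by rw [neg_smul]]
      exact AddSubmonoid.smul_mem_smul (S.neg_mem ha) hm
    · rw [neg_add]
      exact (S.toAddSubmonoid • N.toAddSubmonoid).add_mem hx hy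

/-- A (possibly non-unital) ring, here an additive subgroup of `A` closed under
multiplication, is *s-unital* if every element has a left and a right local unit in it. -/
def IsSUnitalSub (I : AddSubgroup A) : Prop :=
  ∀ a ∈ I, ∃ u ∈ I, ∃ v ∈ I, u * a = a ∧ a * v = a

variable (𝒜 : G → AddSubgroup A)

/-- `S` is symmetrically graded if `S_g S_{g⁻¹} S_g = S_g` for all `g`. -/
def IsSymmetricallyGraded : Prop := ∀ g : G, 𝒜 g * 𝒜 (-g) * 𝒜 g = 𝒜 g

/-- `S` is nearly epsilon-strongly graded if each `S_g` is an s-unital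
`(S_g S_{g⁻¹}, S_{g⁻¹} S_g)`-bimodule: for every `s ∈ S_g` there are
`u ∈ S_g S_{g⁻¹}` and `v ∈ S_{g⁻¹} S_g` with `u s = s = s v`. -/
def IsNearlyEpsilonStrong : Prop :=
  ∀ g : G, ∀ s ∈ 𝒜 g, ∃ u ∈ 𝒜 g * 𝒜 (-g), ∃ v ∈ 𝒜 (-g) * 𝒜 g, u * s = s ∧ s * v = s

theorem prodSMul_le_iff {S : AddSubgroup A} {N P : AddSubgroup M} :
    prodSMul S N ≤ P ↔ ∀ a ∈ S, ∀ m ∈ N, a • m ∈ P :=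
  AddSubmonoid.smul_le (P := P.toAddSubmonoid)

theorem smul_mem_prodSMul {S : AddSubgroup A} {N : AddSubgroup M} {a : A} {m : M}
    (ha : a ∈ S) (hm : m ∈ N) : a • m ∈ prodSMul S N :=
  AddSubmonoid.smul_mem_smul ha hm

theorem prodSMul_mul_le {S T : AddSubgroup A} {N N' : AddSubgroup M}
    (h : prodSMul T N ≤ N') : prodSMul (S * T) N ≤ prodSMul S N' := by
  refine prodSMul_le_iff.2 fun a ha m hm => ?_
  refine AddSubmonoid.mul_induction_on ha (fun s hs t ht => ?_) (fun x y hx hy => ?_)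
  · rw [mul_smul]
    exact smul_mem_prodSMul hs (h (smul_mem_prodSMul ht hm))
  · rw [add_smul]
    exact add_mem hx hy

theorem prodSMul_le_prodSMul_of_forall_exists_mul_eq_self {S I : AddSubgroup A}
    {N N' : AddSubgroup M} (hunit : ∀ a ∈ S, ∃ u ∈ I, u * a = a) (h : prodSMul S N ≤ N') :
    prodSMul S N ≤ prodSMul I N' := by
  refine prodSMul_le_iff.2 fun a ha m hm => ?_
  obtain ⟨u, hu, hua⟩ := hunit a ha
  rw [← hua, mul_smul]
  exact smul_mem_prodSMul hu (h (smul_mem_prodSMul ha hm))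

theorem SetLike.GradedSMul.prodSMul_le {ι ι' : Type} [VAdd ι ι'] (𝒜 : ι → AddSubgroup A)
    (ℳ : ι' → AddSubgroup M) [SetLike.GradedSMul 𝒜 ℳ] (i : ι) (j : ι') :
    prodSMul (𝒜 i) (ℳ j) ≤ ℳ (i +ᵥ j) :=
  prodSMul_le_iff.2 fun _ ha _ hm => SetLike.GradedSMul.smul_mem ha hm

theorem IsNearlyEpsilonStrong.exists_mul_eq_self {ι : Type} [AddGroup ι]
    {𝒜 : ι → AddSubgroup A} (hS : IsNearlyEpsilonStrong 𝒜) (g : ι) :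
    ∀ a ∈ 𝒜 g, ∃ u ∈ 𝒜 g * 𝒜 (-g), u * a = a := fun a ha =>
  let ⟨u, hu, _, _, hua, _⟩ := hS g a ha
  ⟨u, hu, hua⟩

theorem smul_component_eq_of_isNearlyEpsilonStrong
    {G : Type} [AddGroup G]
    {A : Type} [Ring A] (𝒜 : G → AddSubgroup A)
    (hS : IsNearlyEpsilonStrong 𝒜)
    {M : Type} [AddCommGroup M] [Module A M]
    (ℳ : G → AddSubgroup M) [SetLike.GradedSMul 𝒜 ℳ]
    (g h : G) :
    prodSMul (𝒜 g) (ℳ h) = prodSMul (𝒜 g * 𝒜 (-g)) (ℳ (g + h)) := by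
  apply le_antisymm
  · exact prodSMul_le_prodSMul_of_forall_exists_mul_eq_self (hS.exists_mul_eq_self g)
      (SetLike.GradedSMul.prodSMul_le 𝒜 ℳ g h)
  · apply prodSMul_mul_le
    simpa using SetLike.GradedSMul.prodSMul_le 𝒜 ℳ (-g) (g + h)
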